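/- Let S be a finite nonempty set, κ : S → ℝ, and let T ⊆ S be nonempty. Then for every k with 1 ≤ k ≤ |T|, H_T(k) ≤ H_S(k), where H_T is the cluster structure function of T with respect to the restriction of κ to T. -/

import Mathlib

open Finset

/-- The bandwidth of a finite part `A`: the range `max κ - min κ` of the complexities over `A`
(equal to the range of the optimality deficiencies `δ(A,x) = c_A - κ x`). -/
noncomputable def band {α : Type*} (κ : α → ℝ) (A : Finset α) : ℝ :=
  if h : A.Nonempty then A.sup' h κ - A.inf' h κ else 0

/-- `P` is a partition of the finite set `S` into exactly `k` nonempty pairwise disjoint parts. -/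
def IsPartition {α : Type*} [DecidableEq α] (S : Finset α) (k : ℕ)
    (P : Finset (Finset α)) : Prop :=
  P.card = k ∧ (∀ A ∈ P, A.Nonempty) ∧
    (∀ A ∈ P, ∀ B ∈ P, A ≠ B → Disjoint A B) ∧ P.sup id = S

/-- The bandwidth criterion value of a partition: the sum of the bandwidths of its parts. -/
noncomputable def critVal {α : Type*} (κ : α → ℝ) (P : Finset (Finset α)) : ℝ :=
  ∑ A ∈ P, band κ A

/-- The cluster structure function: the minimal criterion value over all partitions of `S`
into exactly `k` nonempty parts. -/
noncomputable def csf {α : Type*} [DecidableEq α] (S : Finset α) (κ : α → ℝ) (k : ℕ) : ℝ :=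
  sInf {r : ℝ | ∃ P : Finset (Finset α), IsPartition S k P ∧ r = critVal κ P}

/-!
Intersecting the parts of a `k`-partition of `S` with `T` gives a partition of `T` into at most
`k` parts whose criterion value is no larger, because the bandwidth is monotone under inclusion.
While such a partition has fewer than `|T|` parts, some part has two elements, and splitting off
one of them as a singleton adds a part without increasing the criterion (singletons have bandwidth
zero). Repeating this reaches exactly `k` parts.
-/

section Bandwidth

variable {α : Type*} (κ : α → ℝ)

theorem band_nonneg (A : Finset α) : 0 ≤ band κ A := by
  unfold band
  split_ifs with hA
  · obtain ⟨x, hx⟩ := hA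
    exact sub_nonneg.mpr ((inf'_le κ hx).trans (le_sup' κ hx))
  · rfl

theorem band_mono {A B : Finset α} (hBA : B ⊆ A) : band κ B ≤ band κ A := by
  by_cases hB : B.Nonempty
  · rw [band, band, dif_pos hB, dif_pos (hB.mono hBA)]
    exact sub_le_sub (sup'_mono κ hBA hB) (inf'_mono κ hBA hB)
  · rw [band, dif_neg hB]
    exact band_nonneg κ A

@[simp]
theorem band_singleton (x : α) : band κ {x} = 0 := by
  simp [band]

@[simp]
theorem band_empty : band κ (∅ : Finset α) = 0 := by
  simp [band]

theorem critVal_nonneg (P : Finset (Finset α)) : 0 ≤ critVal κ P :=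
  sum_nonneg fun A _ => band_nonneg κ A

end Bandwidth

namespace Finpartition

section DistribLattice

variable {α : Type*} [DistribLattice α] [OrderBot α] [DecidableEq α] {a b : α}

theorem card_parts_restrict_le (P : Finpartition a) (hb : b ≤ a) :
    #(P.restrict hb).parts ≤ #P.parts :=
  (card_erase_le).trans card_image_le

theorem card_parts_restrict (P : Finpartition a) (hb : b ≤ a)
    (hmeet : ∀ p ∈ P.parts, p ⊓ b ≠ ⊥) : #(P.restrict hb).parts = #P.parts := by
  have hinj : Set.InjOn (· ⊓ b) P.parts := fun p hp q hq (hpq : p ⊓ b = q ⊓ b) => by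
    by_contra hne
    have hdisj : Disjoint (p ⊓ b) (q ⊓ b) := (P.disjoint hp hq hne).mono inf_le_left inf_le_left
    exact hmeet p hp (disjoint_self.mp (hpq ▸ hdisj))
  have hbot : ⊥ ∉ P.parts.image (· ⊓ b) := by
    simpa only [mem_image, not_exists, not_and] using hmeet
  simp only [restrict, erase_eq_of_notMem hbot, card_image_of_injOn hinj]

end DistribLattice

section Finset

variable {α : Type*} [DecidableEq α] (κ : α → ℝ) {s t : Finset α}

theorem isPartition (P : Finpartition s) : IsPartition s #P.parts P.parts :=
  ⟨rfl, fun _ => P.nonempty_of_mem_parts, fun _ hA _ hB => P.disjoint hA hB, P.sup_parts⟩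

theorem critVal_restrict_le (P : Finpartition s) (hts : t ⊆ s) :
    critVal κ (P.restrict hts).parts ≤ critVal κ P.parts := by
  rw [critVal, sum_restrict P hts (band κ) (band_empty κ)]
  exact sum_le_sum fun p _ => band_mono κ inter_subset_left

theorem exists_card_parts_eq_succ (P : Finpartition s) (hP : #P.parts < #s) :
    ∃ Q : Finpartition s, #Q.parts = #P.parts + 1 ∧ critVal κ Q.parts ≤ critVal κ P.parts := by
  obtain ⟨A, hA, hA1⟩ : ∃ A ∈ P.parts, 1 < #A := by
    by_contra! h
    have := P.sum_card_parts ▸ sum_le_card_nsmul P.parts card 1 h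
    rw [smul_eq_mul, mul_one] at this
    omega
  obtain ⟨x, hxA⟩ := P.nonempty_of_mem_parts hA
  have hmeet : ∀ p ∈ P.parts, p ⊓ (s \ {x}) ≠ ⊥ := by
    intro p hp hbot
    have hpx : p ⊆ {x} := fun y hy => by
      by_contra hyx
      have hy' : y ∈ p ∩ (s \ {x}) := mem_inter.mpr ⟨hy, mem_sdiff.mpr ⟨P.le hp hy, hyx⟩⟩
      rw [inf_eq_inter.symm, hbot] at hy'
      exact notMem_empty y hy'
    obtain ⟨y, hy⟩ := P.nonempty_of_mem_parts hp
    have hxp : x ∈ p := mem_singleton.mp (hpx hy) ▸ hy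
    have hpA : p = A := P.eq_of_mem_parts hp hA hxp hxA
    have := card_le_card hpx
    rw [hpA, card_singleton] at this
    omega
  refine ⟨(P.restrict sdiff_subset).extend (b := {x}) (singleton_ne_empty x) sdiff_disjoint
    (sdiff_union_of_subset (singleton_subset_iff.mpr (P.le hA hxA))), ?_, ?_⟩
  · rw [card_extend, card_parts_restrict _ _ hmeet]
  · rw [extend_parts, critVal, sum_insert_zero (band_singleton κ x)]
    exact critVal_restrict_le κ P _

theorem exists_card_parts_eq (P : Finpartition s) {k : ℕ} (hPk : #P.parts ≤ k) (hks : k ≤ #s) :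
    ∃ Q : Finpartition s, #Q.parts = k ∧ critVal κ Q.parts ≤ critVal κ P.parts := by
  induction k, hPk using Nat.le_induction with
  | base => exact ⟨P, rfl, le_rfl⟩
  | succ k hPk ih =>
    obtain ⟨Q, hQk, hQP⟩ := ih (by omega)
    obtain ⟨R, hRQ, hR⟩ := exists_card_parts_eq_succ κ Q (hQk ▸ hks)
    exact ⟨R, hQk ▸ hRQ, hR.trans hQP⟩

end Finset

end Finpartition

section ClusterStructureFunction

variable {α : Type*} [DecidableEq α] {s : Finset α} {k : ℕ} {P : Finset (Finset α)}

def IsPartition.toFinpartition (h : IsPartition s k P) : Finpartition s where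
  parts := P
  supIndep := supIndep_iff_pairwiseDisjoint.mpr fun A hA B hB hAB => h.2.2.1 A hA B hB hAB
  sup_parts := h.2.2.2
  bot_notMem hbot := not_nonempty_empty (h.2.1 ⊥ hbot)

theorem exists_isPartition (hk : 1 ≤ k) (hks : k ≤ #s) : ∃ P, IsPartition s k P := by
  have hs : s ≠ ⊥ := nonempty_iff_ne_empty.mp (card_pos.mp (by omega))
  obtain ⟨Q, hQ, -⟩ := (Finpartition.indiscrete hs).exists_card_parts_eq 0 (by simpa using hk) hks
  exact ⟨Q.parts, hQ ▸ Q.isPartition⟩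

variable (κ : α → ℝ)

theorem csf_le_critVal (hP : IsPartition s k P) : csf s κ k ≤ critVal κ P :=
  csInf_le ⟨0, by rintro _ ⟨Q, -, rfl⟩; exact critVal_nonneg κ Q⟩ ⟨P, hP, rfl⟩

theorem le_csf {r : ℝ} (hk : ∃ P, IsPartition s k P)
    (h : ∀ P, IsPartition s k P → r ≤ critVal κ P) : r ≤ csf s κ k := by
  obtain ⟨P, hP⟩ := hk
  exact le_csInf ⟨_, P, hP, rfl⟩ fun _ ⟨Q, hQ, hr⟩ => hr ▸ h Q hQ

end ClusterStructureFunction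

theorem stmt_7_general {α : Type*} [DecidableEq α] (S : Finset α) (κ : α → ℝ)
    (T : Finset α) (hTS : T ⊆ S) :
    ∀ k, 1 ≤ k → k ≤ T.card → csf T κ k ≤ csf S κ k := by
  intro k hk hkT
  refine le_csf κ (exists_isPartition hk (hkT.trans (card_le_card hTS))) fun P hP => ?_
  let R := hP.toFinpartition.restrict hTS
  obtain ⟨Q, hQk, hQR⟩ :=
    R.exists_card_parts_eq κ ((Finpartition.card_parts_restrict_le _ _).trans hP.1.le) hkT
  calc csf T κ k ≤ critVal κ Q.parts := csf_le_critVal κ (hQk ▸ Q.isPartition)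
    _ ≤ critVal κ R.parts := hQR
    _ ≤ critVal κ P := Finpartition.critVal_restrict_le κ _ hTS

/-- Restricting to a nonempty subset does not increase the cluster structure function:
for `T ⊆ S` nonempty and `1 ≤ k ≤ |T|`, `H_T(k) ≤ H_S(k)`. -/
theorem stmt_7 {α : Type*} [DecidableEq α] (S : Finset α) (hS : S.Nonempty) (κ : α → ℝ)
    (T : Finset α) (hTS : T ⊆ S) (hT : T.Nonempty) :
    ∀ k, 1 ≤ k → k ≤ T.card → csf T κ k ≤ csf S κ k :=
  stmt_7_general S κ T hTS
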